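/- arXiv:2002.05323 — 4 statements merged into one kernel-verified Lean document; each statement's English description precedes it below -/
import Mathlib

section
/- Suppose k = k' and that all doctors have identical ordinal preferences over hospitals. Precisely: let (H,D,U) be a market with |D| = |H| = n, every doctor–hospital pair mutually acceptable, and all doctors inducing the same ordinal ranking of the hospitals. Let 1 ≤ k ≤ n, let μ̂ be any (k,k)-pairwise-stable interview schedule (in particular the doctor-optimal one), let μ^I be the doctor-optimal stable matching of the interview-truncated market, and let μ^DA be the doctor-optimal stable matching of the original market. Then for every doctor d, the rank-order of μ^I(d) in d's interview-truncated preference is weakly lower (i.e., weakly smaller as a number) than the rank-order of μ^DA(d) in d's actual preference. -/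
open Finset

/-- A market: finite sets of doctors `D` and hospitals `H`, utilities for each side
(including the outside option `oD d = u_d(d)`, `oH h = u_h(h)`), with strict preferences. -/
structure Market (D H : Type*) where
  uD : D → H → ℝ
  oD : D → ℝ
  uH : H → D → ℝ
  oH : H → ℝ
  injD : ∀ d, Function.Injective fun x : Option H => x.elim (oD d) (uD d)
  injH : ∀ h, Function.Injective fun x : Option D => x.elim (oH h) (uH h)

variable {D H : Type*}

/-- Utility of a doctor for a potential partner (`none` = staying unmatched). -/
def Market.valD (M : Market D H) (d : D) (x : Option H) : ℝ := x.elim (M.oD d) (M.uD d)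

/-- Utility of a hospital for a potential partner (`none` = staying unmatched). -/
def Market.valH (M : Market D H) (h : H) (x : Option D) : ℝ := x.elim (M.oH h) (M.uH h)

/-- A (one-to-one) matching between doctors and hospitals. -/
structure Matching (D H : Type*) where
  mD : D → Option H
  mH : H → Option D
  consistent : ∀ d h, mD d = some h ↔ mH h = some d

/-- Stability: individual rationality plus no blocking pair. -/
def Stable (M : Market D H) (μ : Matching D H) : Prop :=
  (∀ d, M.valD d (μ.mD d) ≥ M.oD d) ∧ (∀ h, M.valH h (μ.mH h) ≥ M.oH h) ∧
    ¬ ∃ (d : D) (h : H), M.uD d h > M.valD d (μ.mD d) ∧ M.uH h d > M.valH h (μ.mH h)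

/-- Doctor-optimal stable matching. -/
def DoctorOptimal (M : Market D H) (μ : Matching D H) : Prop :=
  Stable M μ ∧ ∀ μ' : Matching D H, Stable M μ' → ∀ d, M.valD d (μ.mD d) ≥ M.valD d (μ'.mD d)

/-- Rank-order of a potential partner `x` in doctor `d`'s actual preference over `H ∪ {d}`:
one plus the number of alternatives strictly preferred to `x`. -/
noncomputable def rankD [Fintype H] (M : Market D H) (d : D) (x : Option H) : ℕ :=
  1 + (univ.filter fun h' : H => M.uD d h' > M.valD d x).card
    + (if M.oD d > M.valD d x then 1 else 0)

/-- An interview schedule (a many-to-many matching). -/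
structure ISched (D H : Type*) where
  iD : D → Finset H
  iH : H → Finset D
  mem_iff : ∀ d h, h ∈ iD d ↔ d ∈ iH h

/-- `(k,k')`-pairwise stability of an interview schedule. -/
def PairwiseStable (M : Market D H) (k k' : ℕ) (s : ISched D H) : Prop :=
  (∀ d, (s.iD d).card ≤ k ∧ ∀ h ∈ s.iD d, M.uD d h > M.oD d) ∧
  (∀ h, (s.iH h).card ≤ k' ∧ ∀ d ∈ s.iH h, M.uH h d > M.oH h) ∧
  ¬ ∃ (d : D) (h : H), d ∉ s.iH h ∧
      ((∃ h' ∈ s.iD d, M.uD d h > M.uD d h') ∨ (M.uD d h > M.oD d ∧ (s.iD d).card < k)) ∧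
      ((∃ d' ∈ s.iH h, M.uH h d > M.uH h d') ∨ (M.uH h d > M.oH h ∧ (s.iH h).card < k'))

/-- Stability of a matching for the interview-truncated market: only interview partners can be
matched, individual rationality, and no blocking pair among mutually interviewed pairs. -/
def TruncStable (M : Market D H) (s : ISched D H) (μ : Matching D H) : Prop :=
  (∀ d h, μ.mD d = some h → h ∈ s.iD d) ∧
  (∀ d, M.valD d (μ.mD d) ≥ M.oD d) ∧ (∀ h, M.valH h (μ.mH h) ≥ M.oH h) ∧
    ¬ ∃ (d : D) (h : H), h ∈ s.iD d ∧
        M.uD d h > M.valD d (μ.mD d) ∧ M.uH h d > M.valH h (μ.mH h)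

/-- Doctor-optimal stable matching of the interview-truncated market. -/
def TruncDoctorOptimal (M : Market D H) (s : ISched D H) (μ : Matching D H) : Prop :=
  TruncStable M s μ ∧
    ∀ μ' : Matching D H, TruncStable M s μ' → ∀ d, M.valD d (μ.mD d) ≥ M.valD d (μ'.mD d)

/-- Rank-order of a potential partner `x` in doctor `d`'s interview-truncated preference:
one plus the number of alternatives in `μ̂(d) ∪ {d}` strictly preferred to `x`. -/
noncomputable def rankTruncD (M : Market D H) (s : ISched D H) (d : D) (x : Option H) : ℕ :=
  1 + ((s.iD d).filter fun h' : H => M.uD d h' > M.valD d x).card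
    + (if M.oD d > M.valD d x then 1 else 0)

/-- All doctors induce the same ordinal ranking of the hospitals. -/
def CommonDocPrefs (M : Market D H) : Prop :=
  ∀ d d' h h', M.uD d h > M.uD d h' ↔ M.uD d' h > M.uD d' h'

/-- Every doctor–hospital pair is mutually acceptable. -/
def AllAcceptable (M : Market D H) : Prop :=
  ∀ d h, M.uD d h > M.oD d ∧ M.uH h d > M.oH h


/-!
With common preferences every doctor ranks the hospitals in the same order, so the number of
hospitals above a given one does not depend on the doctor. Let `h = μᴰᴬ(d)` have fewer than `k`
hospitals above it. Then `d` interviews at `h`: otherwise `(d, h)` blocks the schedule, since `d`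
cannot fill `k` slots with hospitals better than `h`, and `h` cannot fill `k` slots with doctors
it prefers to `d`, because stability of `μᴰᴬ` sends each of them injectively to a hospital above
`h`. By strong induction on the number of hospitals above `h`, `μᴵ(d)` is at least as good as
`h`: a doctor `d''` that `h` prefers to `d` and holds `h` in `μᴵ` has a DA partner ranked above
`h`, which by induction `d''` weakly prefers to its `μᴵ`-partner `h`. Comparing the two rank
counts then gives the claim. If instead `k` or more hospitals are above `h`, the actual rank
exceeds `k`, whereas `d` has at most `k` interviews, so its truncated rank is at most `k + 1`.
-/

namespace Market

variable (M : Market D H)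

theorem uD_injective (d : D) : Function.Injective (M.uD d) := fun h h' e =>
  Option.some_injective _ (M.injD d (a₁ := some h) (a₂ := some h') e)

theorem uH_injective (h : H) : Function.Injective (M.uH h) := fun d d' e =>
  Option.some_injective _ (M.injH h (a₁ := some d) (a₂ := some d') e)

noncomputable def numAboveD [Fintype H] (d : D) (h : H) : ℕ :=
  (univ.filter fun h' => M.uD d h < M.uD d h').card

variable [Fintype H] {M}

theorem numAboveD_lt_of_lt {d : D} {h h' : H} (hlt : M.uD d h < M.uD d h') :
    M.numAboveD d h' < M.numAboveD d h := by
  refine card_lt_card ⟨fun x hx => ?_, fun hsub => ?_⟩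
  · simp only [mem_filter, mem_univ, true_and] at hx ⊢
    exact hlt.trans hx
  · simpa using hsub (mem_filter.2 ⟨mem_univ h', hlt⟩)

theorem numAboveD_congr (hcommon : CommonDocPrefs M) (d d' : D) (h : H) :
    M.numAboveD d h = M.numAboveD d' h := by
  unfold numAboveD
  congr 1
  exact filter_congr fun h' _ => hcommon d d' h' h

end Market

section

open Market

variable {M : Market D H} {d d' : D} {h : H}

theorem rankTruncD_le_succ (s : ISched D H) {k : ℕ} {x : Option H}
    (hcard : (s.iD d).card ≤ k) (hIR : M.oD d ≤ M.valD d x) : rankTruncD M s d x ≤ k + 1 := by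
  unfold rankTruncD
  rw [if_neg hIR.not_gt, add_zero, add_comm]
  exact Nat.succ_le_succ ((card_filter_le _ _).trans hcard)

theorem Matching.eq_of_mD_eq_some (μ : Matching D H) {d₁ d₂ : D}
    (h₁ : μ.mD d₁ = some h) (h₂ : μ.mD d₂ = some h) : d₁ = d₂ :=
  Option.some_injective _ (((μ.consistent d₁ h).1 h₁).symm.trans ((μ.consistent d₂ h).1 h₂))

theorem Stable.le_valD {μ : Matching D H} (hμ : Stable M μ)
    (hH : M.valH h (μ.mH h) < M.uH h d) : M.uD d h ≤ M.valD d (μ.mD d) :=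
  not_lt.1 fun hD => hμ.2.2 ⟨d, h, hD, hH⟩

theorem TruncStable.le_valD {s : ISched D H} {μ : Matching D H} (hμ : TruncStable M s μ)
    (hmem : h ∈ s.iD d) (hH : M.valH h (μ.mH h) < M.uH h d) :
    M.uD d h ≤ M.valD d (μ.mD d) :=
  not_lt.1 fun hD => hμ.2.2.2 ⟨d, h, hmem, hD, hH⟩

theorem Stable.exists_better_of_hospital_prefers {μ : Matching D H} (hμ : Stable M μ)
    (hm : μ.mD d = some h) (hgt : M.uH h d < M.uH h d') (hacc : M.oD d' < M.uD d' h) :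
    ∃ h', μ.mD d' = some h' ∧ M.uD d' h < M.uD d' h' := by
  have hle := hμ.le_valD (d := d') (h := h) (by rwa [(μ.consistent d h).1 hm])
  cases hm' : μ.mD d' with
  | none =>
    rw [hm'] at hle
    exact (hacc.not_ge hle).elim
  | some h' =>
    rw [hm'] at hle
    refine ⟨h', rfl, hle.lt_of_ne fun he => ?_⟩
    rw [← M.uD_injective d' he] at hm'
    exact hgt.ne (congrArg (M.uH h) (μ.eq_of_mD_eq_some hm hm'))

variable [Fintype H]

theorem rankD_some (hh : M.oD d < M.uD d h) :
    rankD M d (some h) = 1 + M.numAboveD d h := by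
  simp [rankD, numAboveD, Market.valD, hh.not_gt]

theorem rankTruncD_le_rankD (s : ISched D H) {x y : Option H}
    (hxy : M.valD d y ≤ M.valD d x) : rankTruncD M s d x ≤ rankD M d y := by
  refine add_le_add (add_le_add le_rfl (card_le_card fun h' hh' => ?_)) ?_
  · simp only [mem_filter, mem_univ, true_and] at hh' ⊢
    exact hxy.trans_lt hh'.2
  · split_ifs with hx hy <;> first | omega | exact absurd (hxy.trans_lt hx) hy

theorem Stable.card_le_numAboveD {μ : Matching D H} (hμ : Stable M μ)
    (hacc : AllAcceptable M) (hcommon : CommonDocPrefs M) (hm : μ.mD d = some h)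
    {T : Finset D} (hT : ∀ d' ∈ T, M.uH h d < M.uH h d') : T.card ≤ M.numAboveD d h := by
  have : Nonempty H := ⟨h⟩
  choose! f hf using fun d' hd' =>
    hμ.exists_better_of_hospital_prefers hm (hT d' hd') (hacc d' h).1
  refine card_le_card_of_injOn f (fun d' hd' => ?_) (fun d₁ hd₁ d₂ hd₂ he => ?_)
  · simpa using (hcommon d' d (f d') h).1 (hf d' hd').2
  · exact μ.eq_of_mD_eq_some (hf d₁ hd₁).1 (he ▸ (hf d₂ hd₂).1)

theorem PairwiseStable.mem_iD_of_numAboveD_lt {k : ℕ} {s : ISched D H}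
    {μ : Matching D H} (hs : PairwiseStable M k k s) (hμ : Stable M μ) (hacc : AllAcceptable M)
    (hcommon : CommonDocPrefs M) (hm : μ.mD d = some h) (hk : M.numAboveD d h < k) :
    h ∈ s.iD d := by
  by_contra hns
  have hnsH : d ∉ s.iH h := fun hc => hns ((s.mem_iff d h).2 hc)
  refine hs.2.2 ⟨d, h, hnsH, ?_, ?_⟩
  · by_contra! hD
    have hsub : s.iD d ⊆ univ.filter fun h' => M.uD d h < M.uD d h' := fun h' hh' =>
      mem_filter.2 ⟨mem_univ _, (hD.1 h' hh').lt_of_ne fun he => hns (M.uD_injective d he ▸ hh')⟩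
    have := card_le_card hsub
    have := hD.2 (hacc d h).1
    unfold numAboveD at hk
    omega
  · by_contra! hHosp
    have hT : ∀ d' ∈ s.iH h, M.uH h d < M.uH h d' := fun d' hd' =>
      (hHosp.1 d' hd').lt_of_ne fun he => hnsH (M.uH_injective h he ▸ hd')
    have := hμ.card_le_numAboveD hacc hcommon hm hT
    have := hHosp.2 (hacc d h).2
    omega

theorem TruncStable.uD_le_valD_of_numAboveD_lt {k : ℕ} {s : ISched D H}
    {μI μ : Matching D H} (hI : TruncStable M s μI) (hμ : Stable M μ) (hacc : AllAcceptable M)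
    (hcommon : CommonDocPrefs M) (hs : PairwiseStable M k k s) (hm : μ.mD d = some h)
    (hk : M.numAboveD d h < k) : M.uD d h ≤ M.valD d (μI.mD d) := by
  induction hn : M.numAboveD d h using Nat.strong_induction_on generalizing d h with
  | _ n IH =>
  by_contra! hlt
  have hH : M.uH h d ≤ M.valH h (μI.mH h) := not_lt.1 fun hH =>
    (hI.le_valD (hs.mem_iD_of_numAboveD_lt hμ hacc hcommon hm hk) hH).not_gt hlt
  cases he : μI.mH h with
  | none =>
    rw [he] at hH
    exact (hacc d h).2.not_ge hH
  | some d'' =>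
    rw [he] at hH
    have hne : d ≠ d'' := by
      rintro rfl
      rw [(μI.consistent d h).2 he] at hlt
      exact lt_irrefl _ hlt
    obtain ⟨h₂, hm₂, hgt₂⟩ := hμ.exists_better_of_hospital_prefers hm
      (hH.lt_of_ne (mt (M.uH_injective h ·) hne)) (hacc d'' h).1
    have hlt₂ : M.numAboveD d'' h₂ < n :=
      hn ▸ numAboveD_congr hcommon d'' d h ▸ numAboveD_lt_of_lt hgt₂
    have := IH _ hlt₂ hm₂ (hlt₂.trans_le (hn ▸ hk.le)) rfl
    rw [(μI.consistent d'' h).2 he] at this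
    exact hgt₂.not_ge this

end

theorem aligned_preferences_interviews_improve_rank_general
    {D H : Type*} [Fintype H]
    (M : Market D H) (k : ℕ)
    (hacc : AllAcceptable M) (hcommon : CommonDocPrefs M)
    (s : ISched D H) (hs : PairwiseStable M k k s)
    (μI : Matching D H) (hI : TruncDoctorOptimal M s μI)
    (μDA : Matching D H) (hDA : DoctorOptimal M μDA) :
    ∀ d : D, rankTruncD M s d (μI.mD d) ≤ rankD M d (μDA.mD d) := by
  intro d
  cases hm : μDA.mD d with
  | none => exact rankTruncD_le_rankD s (hI.1.2.1 d)
  | some h =>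
    by_cases hk : M.numAboveD d h < k
    · exact rankTruncD_le_rankD s (hI.1.uD_le_valD_of_numAboveD_lt hDA.1 hacc hcommon hs hm hk)
    · rw [rankD_some (hacc d h).1]
      exact (rankTruncD_le_succ s (hs.1 d).1 (hI.1.2.1 d)).trans (by omega)

/-- Proposition 1: with `k = k'`, identical doctor preferences, `|D| = |H| = n`,
and all pairs mutually acceptable, for every doctor `d` the rank-order of `μᴵ(d)` in `d`'s
interview-truncated preference is weakly smaller than the rank-order of `μᴰᴬ(d)` in `d`'s
actual preference. -/
theorem aligned_preferences_interviews_improve_rank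
    {D H : Type*} [Fintype D] [Fintype H]
    (M : Market D H) (n k : ℕ)
    (hD : Fintype.card D = n) (hH : Fintype.card H = n)
    (hacc : AllAcceptable M) (hcommon : CommonDocPrefs M)
    (hk1 : 1 ≤ k) (hkn : k ≤ n)
    (s : ISched D H) (hs : PairwiseStable M k k s)
    (μI : Matching D H) (hI : TruncDoctorOptimal M s μI)
    (μDA : Matching D H) (hDA : DoctorOptimal M μDA) :
    ∀ d : D, rankTruncD M s d (μI.mD d) ≤ rankD M d (μDA.mD d) :=
  aligned_preferences_interviews_improve_rank_general M k hacc hcommon s hs μI hI μDA hDA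
end

section
/- In the interview stage with identical doctor preferences, each of the k most commonly preferred hospitals interviews exactly its k most-preferred doctors. Precisely: let (H,D,U) be a market with |D| = |H| = n, every pair mutually acceptable, and all doctors inducing the same ordinal ranking of hospitals; label the hospitals h_1, …, h_n in decreasing order of this common preference, and let 1 ≤ k ≤ n. Then in every (k,k)-pairwise-stable interview schedule μ̂, for each r ≤ k the set μ̂(h_r) equals the set of the k doctors with the highest utility u_{h_r}. -/
open Finset

variable {D H : Type*}

lemma fin_filter_lt_card (n k : ℕ) (hk : k ≤ n) :
    ((univ : Finset (Fin n)).filter fun i : Fin n => (i : ℕ) < k).card = k := by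
  have heq : ((univ : Finset (Fin n)).filter fun i : Fin n => (i : ℕ) < k)
      = (Finset.range k).attachFin (fun m hm => lt_of_lt_of_le (Finset.mem_range.1 hm) hk) := by
    ext i; simp [Finset.mem_attachFin]
  rw [heq, Finset.card_attachFin, Finset.card_range]

lemma rank_lt_of_gt {D : Type*} [Fintype D] (f : D → ℝ) {a b : D} (hab : f a < f b) :
    ((univ : Finset D).filter fun d' => f d' > f b).card
      < ((univ : Finset D).filter fun d' => f d' > f a).card := by
  apply Finset.card_lt_card
  constructor
  · intro x hx
    simp only [mem_filter, mem_univ, true_and] at *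
    exact lt_trans hab hx
  · intro hsub
    have hb : b ∈ (univ : Finset D).filter fun d' => f d' > f a := by simp [hab]
    have := hsub hb
    simp at this

lemma rank_filter_card {D : Type*} [Fintype D] {n k : ℕ} (f : D → ℝ)
    (hf : Function.Injective f) (hD : Fintype.card D = n) (hk : k ≤ n) :
    ((univ : Finset D).filter fun d =>
      ((univ : Finset D).filter fun d' => f d' > f d).card < k).card = k := by
  have hrank : ∀ d : D, ((univ : Finset D).filter fun d' => f d' > f d).card < n := by
    intro d
    have hss : ((univ : Finset D).filter fun d' => f d' > f d) ⊂ univ :=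
      (Finset.ssubset_iff_of_subset (filter_subset _ _)).2 ⟨d, mem_univ d, by simp⟩
    have := Finset.card_lt_card hss
    rwa [Finset.card_univ, hD] at this
  set g : D → Fin n := fun d => ⟨_, hrank d⟩ with hg
  have hginj : Function.Injective g := by
    intro a b hab
    by_contra hne
    have hfne : f a ≠ f b := fun hh => hne (hf hh)
    have hv : (g a : ℕ) = (g b : ℕ) := by rw [hab]
    simp only [hg] at hv
    rcases hfne.lt_or_gt with hlt | hlt
    · have := rank_lt_of_gt f hlt; omega
    · have := rank_lt_of_gt f hlt; omega
  have hgbij : Function.Bijective g :=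
    (Fintype.bijective_iff_injective_and_card g).2 ⟨hginj, by simp [hD]⟩
  have himg : ((univ : Finset D).filter fun d => (g d : ℕ) < k).image g
      = (univ : Finset (Fin n)).filter fun i : Fin n => (i : ℕ) < k := by
    ext i
    simp only [mem_image, mem_filter, mem_univ, true_and]
    constructor
    · rintro ⟨d, hd, rfl⟩; exact hd
    · intro hi; obtain ⟨d, rfl⟩ := hgbij.2 i; exact ⟨d, hi, rfl⟩
  have : ((univ : Finset D).filter fun d => (g d : ℕ) < k).card = k := by
    rw [← Finset.card_image_of_injective _ hginj, himg, fin_filter_lt_card n k hk]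
  exact this

/-- with identical doctor preferences, in every `(k,k)`-pairwise-stable
interview schedule, each of the `k` most commonly preferred hospitals interviews exactly its
`k` most-preferred doctors. -/
theorem top_hospitals_interview_top_doctors
    {D H : Type*} [Fintype D] [Fintype H]
    (M : Market D H) (n : ℕ)
    (hD : Fintype.card D = n) (hH : Fintype.card H = n)
    (hacc : AllAcceptable M) (hcommon : CommonDocPrefs M)
    (e : Fin n ≃ H)
    (hdec : ∀ (d : D) (i j : Fin n), i < j → M.uD d (e i) > M.uD d (e j))
    (k : ℕ) (hk1 : 1 ≤ k) (hkn : k ≤ n)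
    (s : ISched D H) (hs : PairwiseStable M k k s) :
    ∀ r : Fin n, (r : ℕ) < k →
      s.iH (e r) =
        univ.filter fun d : D =>
          (univ.filter fun d' : D => M.uH (e r) d' > M.uH (e r) d).card < k := by
  classical
  intro r hr
  set h : H := e r with hh
  have hfinj : Function.Injective (M.uH h) := by
    intro a b hab
    have : (some a : Option D) = some b :=
      M.injH h (show (some a : Option D).elim (M.oH h) (M.uH h)
        = (some b : Option D).elim (M.oH h) (M.uH h) from hab)
    exact Option.some_injective _ this
  set T : Finset D := univ.filter fun d : D =>
      (univ.filter fun d' : D => M.uH h d' > M.uH h d).card < k with hT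
  have hTcard : T.card = k := rank_filter_card (M.uH h) hfinj hD hkn
  have hsub : T ⊆ s.iH h := by
    intro d hdT
    by_contra hd
    apply hs.2.2
    refine ⟨d, h, hd, ?_, ?_⟩
    · -- doctor side
      by_cases hlt : (s.iD d).card < k
      · exact Or.inr ⟨(hacc d h).1, hlt⟩
      · push_neg at hlt
        left
        by_contra hno
        push_neg at hno
        have hsubset : s.iD d ⊆ (univ.filter fun j : Fin n => (j : ℕ) < (r : ℕ)).image e := by
          intro h' hh'
          have hne : e.symm h' ≠ r := by
            intro heq
            have : h' = h := by rw [hh, ← heq, Equiv.apply_symm_apply]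
            rw [this] at hh'
            exact hd ((s.mem_iff d h).1 hh')
          rcases lt_or_gt_of_ne hne with hlt' | hgt'
          · refine Finset.mem_image.2 ⟨e.symm h', ?_, Equiv.apply_symm_apply e h'⟩
            simp only [mem_filter, mem_univ, true_and]
            exact hlt'
          · have hpref := hdec d r (e.symm h') hgt'
            rw [Equiv.apply_symm_apply] at hpref
            exact absurd hpref (not_lt.2 (hno h' hh'))
        have hcardle : (s.iD d).card
            ≤ ((univ.filter fun j : Fin n => (j : ℕ) < (r : ℕ)).image e).card :=
          Finset.card_le_card hsubset
        have himcard : ((univ.filter fun j : Fin n => (j : ℕ) < (r : ℕ)).image e).card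
            = (r : ℕ) := by
          rw [Finset.card_image_of_injective _ e.injective,
            fin_filter_lt_card n r (le_of_lt r.isLt)]
        omega
    · -- hospital side
      by_cases hlt : (s.iH h).card < k
      · exact Or.inr ⟨(hacc d h).2, hlt⟩
      · push_neg at hlt
        left
        have hnsub : ¬ s.iH h ⊆ T := by
          intro hsub2
          have heq : s.iH h = T :=
            Finset.eq_of_subset_of_card_le hsub2 (by omega)
          rw [← heq] at hdT
          exact hd hdT
        obtain ⟨d', hd'iH, hd'T⟩ := Finset.not_subset.1 hnsub
        refine ⟨d', hd'iH, ?_⟩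
        simp only [hT, mem_filter, mem_univ, true_and] at hdT hd'T
        push_neg at hd'T
        rcases lt_trichotomy (M.uH h d') (M.uH h d) with hlt2 | heq2 | hgt2
        · exact hlt2
        · exfalso
          have : d' = d := hfinj heq2
          rw [this] at hd'T
          omega
        · exfalso
          have := rank_lt_of_gt (M.uH h) hgt2
          omega
  have hle : (s.iH h).card ≤ T.card := by rw [hTcard]; exact (hs.2.1 h).1
  exact (Finset.eq_of_subset_of_card_le hsub hle).symm
end

section
/- With identical doctor preferences, the k most commonly preferred hospitals receive the same partner under Int-DA as under deferred acceptance on the full preferences. Precisely: let (H,D,U) be a market with |D| = |H| = n, every pair mutually acceptable, and all doctors inducing the same ordinal ranking of hospitals; label the hospitals h_1, …, h_n in decreasing order of this common preference, and let 1 ≤ k ≤ n. Let μ̂ be any (k,k)-pairwise-stable interview schedule, μ^I the doctor-optimal stable matching of the interview-truncated market, and μ^DA the doctor-optimal stable matching of the original market. Then for every r ≤ k, μ^DA(h_r) = μ^I(h_r). -/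
open Finset

variable {D H : Type*}

/-!
When all doctors rank the hospitals `h₀ > h₁ > ⋯` alike, a stable matching is serial dictatorship
by the hospitals in this order: once `h₀, …, h_{r-1}` have their partners, `h_r` is matched to its
favourite `d` among the remaining doctors, since otherwise `(d, h_r)` blocks. For `r < k` the same
holds in the interview-truncated market, because pairwise stability forces `h_r` to interview `d`:
if it did not, `d` would have a free interview slot or prefer `h_r` to one of its `k` interviews
(at most `r < k` of them rank above `h_r`), so `h_r` would have filled its `k` slots with doctors
it prefers to `d`; but those are all taken by the `r` hospitals above `h_r`. Induction on `r`
concludes.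
-/

namespace Market

variable (M : Market D H)

theorem valD_lt_of_ne {d : D} {h : H} {x : Option H} (hacc : M.oD d < M.uD d h)
    (hle : ∀ h', x = some h' → M.uD d h' ≤ M.uD d h) (hne : x ≠ some h) :
    M.valD d x < M.uD d h := by
  cases x with
  | none => exact hacc
  | some h' =>
    exact (hle h' rfl).lt_of_ne fun heq => hne (congrArg some (M.uD_injective d heq))

theorem valH_lt_of_ne {h : H} {d : D} {x : Option D} (hacc : M.oH h < M.uH h d)
    (hle : ∀ d', x = some d' → M.uH h d' ≤ M.uH h d) (hne : x ≠ some d) :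
    M.valH h x < M.uH h d := by
  cases x with
  | none => exact hacc
  | some d' =>
    exact (hle d' rfl).lt_of_ne fun heq => hne (congrArg some (M.uH_injective h heq))

end Market

def Blocks (M : Market D H) (μ : Matching D H) (d : D) (h : H) : Prop :=
  M.uD d h > M.valD d (μ.mD d) ∧ M.uH h d > M.valH h (μ.mH h)

namespace Matching

variable (μ : Matching D H)

theorem mH_eq_some_of_not_blocks (M : Market D H) {d : D} {h : H}
    (hd : M.oD d < M.uD d h) (hh : M.oH h < M.uH h d)
    (hdμ : ∀ h', μ.mD d = some h' → M.uD d h' ≤ M.uD d h)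
    (hhμ : ∀ d', μ.mH h = some d' → M.uH h d' ≤ M.uH h d)
    (hblock : ¬ Blocks M μ d h) : μ.mH h = some d := by
  by_contra hne
  exact hblock ⟨M.valD_lt_of_ne hd hdμ (mt (μ.consistent d h).1 hne),
    M.valH_lt_of_ne hh hhμ hne⟩

section Remaining

variable [Fintype D] [DecidableEq H]

def remainingDoctors (T : Finset H) : Finset D :=
  univ.filter fun d => ∀ h ∈ μ.mD d, h ∉ T

variable {μ} {T : Finset H}

theorem mem_remainingDoctors {d : D} :
    d ∈ μ.remainingDoctors T ↔ ∀ h, μ.mD d = some h → h ∉ T := by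
  simp [remainingDoctors]

theorem remainingDoctors_congr {ν : Matching D H} (hμν : ∀ h ∈ T, μ.mH h = ν.mH h) :
    μ.remainingDoctors T = ν.remainingDoctors T := by
  ext d
  simp only [mem_remainingDoctors]
  refine forall_congr' fun h => ⟨fun hμ hν hT => hμ ?_ hT, fun hν hμ hT => hν ?_ hT⟩
  · rwa [μ.consistent, hμν h hT, ← ν.consistent]
  · rwa [ν.consistent, ← hμν h hT, ← μ.consistent]

theorem card_le_of_forall_notMem_remainingDoctors {A : Finset D}
    (hA : ∀ d ∈ A, d ∉ μ.remainingDoctors T) : A.card ≤ T.card := by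
  have hmatched : ∀ d ∈ A, ∃ h ∈ T, μ.mD d = some h := fun d hd => by
    simpa [mem_remainingDoctors, and_comm] using hA d hd
  calc A.card ≤ (T.map Function.Embedding.some).card := by
        refine card_le_card_of_injOn μ.mD (fun d hd => ?_) fun d₁ hd₁ d₂ _ h₁₂ => ?_
        · obtain ⟨h, hT, hdh⟩ := hmatched d hd
          simpa [hdh] using hT
        · obtain ⟨h, -, hdh⟩ := hmatched d₁ hd₁
          have h₁ := (μ.consistent d₁ h).1 hdh
          have h₂ := (μ.consistent d₂ h).1 (h₁₂ ▸ hdh)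
          exact Option.some_injective _ (h₁.symm.trans h₂)
    _ = T.card := card_map _

theorem remainingDoctors_nonempty (μ : Matching D H) (hT : T.card < Fintype.card D) :
    (μ.remainingDoctors T).Nonempty := by
  by_contra hempty
  have := μ.card_le_of_forall_notMem_remainingDoctors (A := univ) fun d _ hd => hempty ⟨d, hd⟩
  rw [card_univ] at this
  omega

theorem mH_eq_some_of_forall_remaining_le (M : Market D H) {d : D} {h : H}
    (hd : M.oD d < M.uD d h) (hh : M.oH h < M.uH h d) (hhT : h ∉ T)
    (htop : ∀ h' ∉ T, h' ≠ h → M.uD d h' < M.uD d h) (hdT : d ∈ μ.remainingDoctors T)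
    (hmax : ∀ d' ∈ μ.remainingDoctors T, M.uH h d' ≤ M.uH h d)
    (hblock : ¬ Blocks M μ d h) : μ.mH h = some d := by
  refine μ.mH_eq_some_of_not_blocks M hd hh (fun h' hdh' => ?_) (fun d' hd' => hmax d' ?_) hblock
  · rcases eq_or_ne h' h with rfl | hne
    · exact le_rfl
    · exact (htop h' (mem_remainingDoctors.1 hdT h' hdh') hne).le
  · refine mem_remainingDoctors.2 fun h' hd'h' hT => hhT ?_
    rw [(μ.consistent d' h).2 hd', Option.some_inj] at hd'h'
    exact hd'h' ▸ hT

end Remaining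

end Matching

namespace PairwiseStable

variable {M : Market D H} {k : ℕ} {s : ISched D H} {T : Finset H} {d : D} {h : H}

theorem card_iH_eq_and_lt_of_notMem (hs : PairwiseStable M k k s) (hT : T.card < k)
    (hd : M.oD d < M.uD d h) (hh : M.oH h < M.uH h d)
    (htop : ∀ h' ∉ T, h' ≠ h → M.uD d h' < M.uD d h) (hnot : d ∉ s.iH h) :
    (s.iH h).card = k ∧ ∀ d' ∈ s.iH h, M.uH h d < M.uH h d' := by
  obtain ⟨hsD, hsH, hnb⟩ := hs
  have hdoc : (∃ h' ∈ s.iD d, M.uD d h > M.uD d h') ∨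
      (M.uD d h > M.oD d ∧ (s.iD d).card < k) := by
    rcases lt_or_ge (s.iD d).card k with hlt | hge
    · exact Or.inr ⟨hd, hlt⟩
    · obtain ⟨h', hh'd, hh'T⟩ := exists_mem_notMem_of_card_lt_card (hT.trans_le hge)
      refine Or.inl ⟨h', hh'd, htop h' hh'T ?_⟩
      rintro rfl
      exact hnot ((s.mem_iff d h').1 hh'd)
  have hhos : ¬ ((∃ d' ∈ s.iH h, M.uH h d > M.uH h d') ∨
      (M.uH h d > M.oH h ∧ (s.iH h).card < k)) := fun hhos => hnb ⟨d, h, hnot, hdoc, hhos⟩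
  push Not at hhos
  refine ⟨le_antisymm (hsH h).1 (hhos.2 hh), fun d' hd' => (hhos.1 d' hd').lt_of_ne ?_⟩
  intro heq
  exact hnot (M.uH_injective h heq ▸ hd')

theorem mem_iH_of_forall_remaining_le [Fintype D] [DecidableEq H]
    (hs : PairwiseStable M k k s) (hT : T.card < k)
    (hd : M.oD d < M.uD d h) (hh : M.oH h < M.uH h d)
    (htop : ∀ h' ∉ T, h' ≠ h → M.uD d h' < M.uD d h) (μ : Matching D H)
    (hmax : ∀ d' ∈ μ.remainingDoctors T, M.uH h d' ≤ M.uH h d) : d ∈ s.iH h := by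
  by_contra hnot
  obtain ⟨hcard, hbetter⟩ := hs.card_iH_eq_and_lt_of_notMem hT hd hh htop hnot
  have := Matching.card_le_of_forall_notMem_remainingDoctors
    fun d' hd' hrem => (hmax d' hrem).not_gt (hbetter d' hd')
  omega

end PairwiseStable

theorem top_hospitals_same_partner_general
    {D H : Type*} [Fintype D]
    (M : Market D H) (n : ℕ)
    (hD : Fintype.card D = n)
    (hacc : AllAcceptable M)
    (e : Fin n ≃ H)
    (hdec : ∀ (d : D) (i j : Fin n), i < j → M.uD d (e i) > M.uD d (e j))
    (k : ℕ)
    (s : ISched D H) (hs : PairwiseStable M k k s)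
    (μI : Matching D H) (hI : TruncDoctorOptimal M s μI)
    (μDA : Matching D H) (hDA : DoctorOptimal M μDA) :
    ∀ r : Fin n, (r : ℕ) < k → μDA.mH (e r) = μI.mH (e r) := by
  classical
  intro r
  induction r using WellFoundedLT.induction with
  | _ r ih =>
  intro hrk
  set T := (Iio r).map e.toEmbedding
  have hT : T.card = r := by simp [T]
  have htop : ∀ d, ∀ h' ∉ T, h' ≠ e r → M.uD d h' < M.uD d (e r) := fun d h' hT hne => by
    have hlt : r < e.symm h' :=
      lt_of_le_of_ne (by simpa [T] using hT) fun heq => hne (by simp [heq])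
    simpa using hdec d r _ hlt
  have hsame : μI.remainingDoctors T = μDA.remainingDoctors T :=
    Matching.remainingDoctors_congr fun h hh => by
      have hi : e.symm h < r := by simpa [T] using hh
      rw [← e.apply_symm_apply h]
      exact (ih _ hi (lt_trans (Fin.lt_def.1 hi) hrk)).symm
  obtain ⟨d, hdT, hmax⟩ := (μDA.remainingDoctors T).exists_max_image (M.uH (e r))
    (μDA.remainingDoctors_nonempty (by rw [hD, hT]; exact r.2))
  have hrT : e r ∉ T := by simp [T]
  rw [μDA.mH_eq_some_of_forall_remaining_le M (hacc d _).1 (hacc d _).2 hrT (htop d) hdT hmax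
      fun hb => hDA.1.2.2 ⟨d, e r, hb⟩,
    μI.mH_eq_some_of_forall_remaining_le M (hacc d _).1 (hacc d _).2 hrT (htop d) (hsame ▸ hdT)
      (hsame ▸ hmax) fun hb => hI.1.2.2.2 ⟨d, e r, (s.mem_iff d _).2 ?_, hb⟩]
  exact hs.mem_iH_of_forall_remaining_le (hT ▸ hrk) (hacc d _).1 (hacc d _).2 (htop d) μDA hmax

/-- with identical doctor preferences, the `k` most commonly preferred
hospitals receive the same partner under Int-DA as under DA on the full preferences. -/
theorem top_hospitals_same_partner
    {D H : Type*} [Fintype D] [Fintype H]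
    (M : Market D H) (n : ℕ)
    (hD : Fintype.card D = n) (hH : Fintype.card H = n)
    (hacc : AllAcceptable M) (hcommon : CommonDocPrefs M)
    (e : Fin n ≃ H)
    (hdec : ∀ (d : D) (i j : Fin n), i < j → M.uD d (e i) > M.uD d (e j))
    (k : ℕ) (hk1 : 1 ≤ k) (hkn : k ≤ n)
    (s : ISched D H) (hs : PairwiseStable M k k s)
    (μI : Matching D H) (hI : TruncDoctorOptimal M s μI)
    (μDA : Matching D H) (hDA : DoctorOptimal M μDA) :
    ∀ r : Fin n, (r : ℕ) < k → μDA.mH (e r) = μI.mH (e r) :=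
  top_hospitals_same_partner_general M n hD hacc e hdec k s hs μI hI μDA hDA
end

section
/- Interviews can strictly worsen a doctor's reported match rank, and the Int-DA outcome can be unstable for the original preferences. Precisely: in the market with doctors D = {d_1,d_2,d_3} and hospitals H = {h_1,h_2,h_3,h_4}, where every pair is mutually acceptable, all four hospitals induce the common ranking d_1 ≻ d_2 ≻ d_3, and the doctors' ordinal preferences are d_1: h_1 ≻ h_3 ≻ h_2 ≻ h_4; d_2: h_2 ≻ h_3 ≻ h_1 ≻ h_4; d_3: h_3 ≻ h_1 ≻ h_4 ≻ h_2, take the interview schedule μ̂ with μ̂(d_1) = {h_1,h_3}, μ̂(d_2) = {h_2,h_3}, μ̂(d_3) = {h_1,h_4}. Then (i) the doctor-optimal stable matching μ^I of the interview-truncated market satisfies μ^I(d_1) = h_1, μ^I(d_2) = h_2, μ^I(d_3) = h_4; (ii) the rank-order of μ^I(d_3) = h_4 in d_3's interview-truncated preference is 2, strictly greater than the rank-order 1 of d_3's partner h_3 under the doctor-optimal stable matching of the original market; and (iii) μ^I is not stable for the original market, since (d_3,h_3) is a blocking pair (u_{d_3}(h_3) > u_{d_3}(μ^I(d_3)) and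 u_{h_3}(d_3) > u_{h_3}(μ^I(h_3)) = u_{h_3}(h_3)). -/
open Finset

variable {D H : Type*}

/-- in the example market with the interview schedule
`μ̂(d_1) = {h_1,h_3}`, `μ̂(d_2) = {h_2,h_3}`, `μ̂(d_3) = {h_1,h_4}`:
(i) the doctor-optimal stable matching `μᴵ` of the interview-truncated market matches
`d_1–h_1`, `d_2–h_2`, `d_3–h_4`; (ii) the rank-order of `μᴵ(d_3) = h_4` in `d_3`'s
interview-truncated preference is 2, while under the doctor-optimal stable matching of the
original market `d_3` is matched to `h_3`, of rank-order 1; and (iii) `μᴵ` is unstable in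
the original market, `(d_3,h_3)` being a blocking pair (with `h_3` unmatched under `μᴵ`).
(`d_i` = `i-1 : Fin 3`, `h_j` = `j-1 : Fin 4`.) -/
theorem example_interviews_worsen_rank
    (M : Market (Fin 3) (Fin 4))
    (hacc : AllAcceptable M)
    (hH : ∀ h : Fin 4, M.uH h 0 > M.uH h 1 ∧ M.uH h 1 > M.uH h 2)
    (hd0 : M.uD 0 0 > M.uD 0 2 ∧ M.uD 0 2 > M.uD 0 1 ∧ M.uD 0 1 > M.uD 0 3)
    (hd1 : M.uD 1 1 > M.uD 1 2 ∧ M.uD 1 2 > M.uD 1 0 ∧ M.uD 1 0 > M.uD 1 3)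
    (hd2 : M.uD 2 2 > M.uD 2 0 ∧ M.uD 2 0 > M.uD 2 3 ∧ M.uD 2 3 > M.uD 2 1)
    (s : ISched (Fin 3) (Fin 4))
    (hs : s.iD 0 = {0, 2} ∧ s.iD 1 = {1, 2} ∧ s.iD 2 = {0, 3})
    (μI : Matching (Fin 3) (Fin 4)) (hI : TruncDoctorOptimal M s μI) :
    (μI.mD 0 = some 0 ∧ μI.mD 1 = some 1 ∧ μI.mD 2 = some 3) ∧
    (rankTruncD M s 2 (μI.mD 2) = 2 ∧
      ∀ μDA : Matching (Fin 3) (Fin 4), DoctorOptimal M μDA →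
        μDA.mD 2 = some 2 ∧ rankD M 2 (μDA.mD 2) = 1) ∧
    (¬ Stable M μI ∧ μI.mH 2 = none ∧
      M.uD 2 2 > M.valD 2 (μI.mD 2) ∧ M.uH 2 2 > M.valH 2 (μI.mH 2)) := by

  obtain ⟨hs0, hs1, hs2⟩ := hs
  obtain ⟨⟨hμint, hμIRD, hμIRH, hμnb⟩, hμopt⟩ := hI
  have hHc := fun h => hH h
  -- the candidate trunc-stable matching
  have μstar : Matching (Fin 3) (Fin 4) :=
    ⟨![some 0, some 1, some 3], ![some 0, some 1, none, some 2], by decide⟩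
  have hstar : TruncStable M s
      ⟨![some 0, some 1, some 3], ![some 0, some 1, none, some 2], by decide⟩ := by
    refine ⟨?_, ?_, ?_, ?_⟩
    · intro d h hdh
      fin_cases d <;> simp_all [hs0, hs1, hs2]
    · intro d
      fin_cases d <;> simp [Market.valD] <;> exact le_of_lt (hacc _ _).1
    · intro h
      fin_cases h <;> simp [Market.valH] <;> exact le_of_lt (hacc _ _).2
    · rintro ⟨d, h, hmem, hdgt, hhgt⟩
      fin_cases d
      · simp [hs0, Market.valD, Market.valH] at hmem hdgt hhgt
        rcases hmem with rfl | rfl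
        · exact absurd hdgt (lt_irrefl _)
        · exact absurd hdgt (by linarith [hd0.1])
      · simp [hs1, Market.valD, Market.valH] at hmem hdgt hhgt
        rcases hmem with rfl | rfl
        · exact absurd hdgt (lt_irrefl _)
        · exact absurd hdgt (by linarith [hd1.1])
      · simp [hs2, Market.valD, Market.valH, Matrix.cons_val_zero, Matrix.cons_val_one,
          Matrix.head_cons] at hmem hdgt hhgt
        rcases hmem with rfl | rfl
        · have h2 : M.uH 0 0 < M.uH 0 2 := hhgt
          linarith [(hH 0).1, (hH 0).2]
        · exact absurd hdgt (lt_irrefl _)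
  have hopt0 := hμopt _ hstar 0
  have hopt1 := hμopt _ hstar 1
  have hopt2 := hμopt _ hstar 2
  simp [Market.valD] at hopt0 hopt1 hopt2
  -- pin down μI.mD 0
  have hm0 : μI.mD 0 = some 0 := by
    cases hm : μI.mD 0 with
    | none => rw [hm] at hopt0; simp [Market.valD] at hopt0
              linarith [(hacc 0 0).1]
    | some h =>
      have hmem := hμint 0 h hm
      rw [hs0] at hmem
      rw [hm] at hopt0; simp [Market.valD] at hopt0
      simp at hmem
      rcases hmem with rfl | rfl
      · rfl
      · exact absurd hopt0 (by linarith [hd0.1])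
  have hm1 : μI.mD 1 = some 1 := by
    cases hm : μI.mD 1 with
    | none => rw [hm] at hopt1; simp [Market.valD] at hopt1
              linarith [(hacc 1 1).1]
    | some h =>
      have hmem := hμint 1 h hm
      rw [hs1] at hmem
      rw [hm] at hopt1; simp [Market.valD] at hopt1
      simp at hmem
      rcases hmem with rfl | rfl
      · rfl
      · exact absurd hopt1 (by linarith [hd1.1])
  have hm2 : μI.mD 2 = some 3 := by
    cases hm : μI.mD 2 with
    | none => rw [hm] at hopt2; simp [Market.valD] at hopt2
              linarith [(hacc 2 3).1]
    | some h =>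
      have hmem := hμint 2 h hm
      rw [hs2] at hmem
      simp at hmem
      rcases hmem with rfl | rfl
      · -- μI.mD 2 = some 0 contradicts μI.mD 0 = some 0 via consistency
        exfalso
        have c2 := (μI.consistent 2 0).mp hm
        have c0 := (μI.consistent 0 0).mp hm0
        rw [c0] at c2
        exact absurd (Option.some.inj c2) (by decide)
      · rfl
  -- h2 is unmatched under μI
  have hH2 : μI.mH 2 = none := by
    cases hh : μI.mH 2 with
    | none => rfl
    | some d =>
      exfalso
      have := (μI.consistent d 2).mpr hh
      fin_cases d <;> simp_all
  refine ⟨⟨hm0, hm1, hm2⟩, ⟨?_, ?_⟩, ?_, hH2, ?_, ?_⟩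
  · -- rankTruncD = 2
    rw [hm2]
    unfold rankTruncD
    have hf : ((s.iD 2).filter fun h' : Fin 4 => M.uD 2 h' > M.valD 2 (some 3)) = {0} := by
      rw [hs2]
      ext x
      simp [Market.valD]
      constructor
      · rintro ⟨hx, hgt⟩
        rcases hx with rfl | rfl
        · rfl
        · exact absurd hgt (lt_irrefl _)
      · rintro rfl
        exact ⟨Or.inl rfl, hd2.2.1⟩
    rw [hf]
    have : ¬ M.oD 2 > M.valD 2 (some 3) := by
      simp [Market.valD]; linarith [(hacc 2 3).1]
    rw [if_neg this]
    simp
  · -- the original doctor-optimal matching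
    intro μDA hDA
    have hcirc : Stable M
        ⟨![some 0, some 1, some 2], ![some 0, some 1, some 2, none], by decide⟩ := by
      refine ⟨?_, ?_, ?_⟩
      · intro d; fin_cases d <;> simp [Market.valD] <;> exact le_of_lt (hacc _ _).1
      · intro h; fin_cases h <;> simp [Market.valH] <;> exact le_of_lt (hacc _ _).2
      · rintro ⟨d, h, hdgt, hhgt⟩
        fin_cases d <;> fin_cases h <;>
          simp [Market.valD, Market.valH] at hdgt hhgt <;>
          linarith [hd0.1, hd0.2.1, hd0.2.2, hd1.1, hd1.2.1, hd1.2.2,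
            hd2.1, hd2.2.1, hd2.2.2]
      
    have hopt := hDA.2 _ hcirc 2
    simp [Market.valD] at hopt
    have hmd : μDA.mD 2 = some 2 := by
      cases hm : μDA.mD 2 with
      | none => rw [hm] at hopt; simp [Market.valD] at hopt
                linarith [(hacc 2 2).1]
      | some h =>
        rw [hm] at hopt; simp [Market.valD] at hopt
        fin_cases h <;>
          simp only [Fin.zero_eta, Fin.mk_one, Fin.reduceFinMk, Fin.isValue] at hopt
        · exact absurd hopt (by linarith [hd2.1])
        · exact absurd hopt (by linarith [hd2.1, hd2.2.1, hd2.2.2])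
        · rfl
        · exact absurd hopt (by linarith [hd2.1, hd2.2.1])
    refine ⟨hmd, ?_⟩
    rw [hmd]
    unfold rankD
    have hf : (Finset.univ.filter fun h' : Fin 4 => M.uD 2 h' > M.valD 2 (some 2)) = ∅ := by
      apply Finset.filter_eq_empty_iff.mpr
      intro x _
      fin_cases x <;> simp [Market.valD] <;>
        linarith [hd2.1, hd2.2.1, hd2.2.2]
    rw [hf]
    have : ¬ M.oD 2 > M.valD 2 (some 2) := by
      simp [Market.valD]; linarith [(hacc 2 2).1]
    rw [if_neg this]
    simp
  · -- not stable
    rintro ⟨_, _, hnb⟩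
    exact hnb ⟨2, 2, by
      rw [hm2]; simp [Market.valD]; exact lt_trans hd2.2.1 hd2.1, by
      rw [hH2]; simp [Market.valH]; exact (hacc 2 2).2⟩
  · rw [hm2]; simp [Market.valD]; exact lt_trans hd2.2.1 hd2.1
  · rw [hH2]; simp [Market.valH]; exact (hacc 2 2).2
end
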